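/- Let m ≥ 2 and let G be a finite group such that G/Z(G) is isomorphic to the dihedral group D_{2m} of order 2m. Then G is an AC-group and the energy of the commuting graph is E(Γ_G) = 2((2m − 1)|Z(G)| − m − 1). -/

import Mathlib

/-!
The kernel of `G → G/Z(G) ≅ D_{2m}` is the centre, so the preimage of the rotations is abelian
(it is cyclic modulo the centre), and a non-central element over a rotation commutes with no
element over a reflection: otherwise it would commute with the preimages of the rotations and of
a reflection, which generate `G`. Hence two non-central elements commute iff their images are both
rotations or are the same reflection, so commuting is an equivalence relation on `G ∖ Z(G)` with
`m + 1` classes, which gives the AC property.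

The commuting graph is then a disjoint union of `m + 1` cliques, and its adjacency matrix is
`A = W Wᵀ - 1`, where `W` is the incidence matrix of vertices and classes. An eigenvector of
`W Wᵀ` with nonzero eigenvalue is constant on a class, so that eigenvalue is a class size `≥ 1`;
thus the eigenvalues of `A` are `-1`, with multiplicity `|V| - rank W = |V| - (m + 1)`, and
nonnegative numbers. As they sum to `tr A = 0`, the energy is `2 (|V| - m - 1)`, and
`|V| = (2m - 1) |Z(G)|`.
-/

open scoped Classical

/-- The commuting graph of a group `G`: its vertices are the non-central
elements of `G`, and two distinct vertices are adjacent iff they commute. -/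
noncomputable def commGraph (G : Type*) [Group G] :
    SimpleGraph {g : G // g ∉ Subgroup.center G} where
  Adj x y := x ≠ y ∧ (x : G) * y = (y : G) * x
  symm := ⟨fun _ _ h => ⟨h.1.symm, h.2.symm⟩⟩
  loopless := ⟨fun _ h => h.1 rfl⟩

lemma adjMatrix_isHermitian {V : Type*} [Fintype V] (Γ : SimpleGraph V) :
    (Γ.adjMatrix ℝ).IsHermitian := by
  ext i j
  simp [Matrix.conjTranspose_apply, SimpleGraph.adj_comm]

/-- The energy of a finite graph: the sum of the absolute values of the
eigenvalues of its adjacency matrix. -/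
noncomputable def graphEnergy {V : Type*} [Fintype V] (Γ : SimpleGraph V) : ℝ :=
  ∑ i, |(adjMatrix_isHermitian Γ).eigenvalues i|

/-- `G` is an AC-group: the centralizer of every non-central element is Abelian. -/
def IsACGroup (G : Type*) [Group G] : Prop :=
  ∀ x : G, x ∉ Subgroup.center G →
    ∀ y ∈ Subgroup.centralizer ({x} : Set G), ∀ z ∈ Subgroup.centralizer ({x} : Set G),
      y * z = z * y

open Finset Matrix Subgroup

theorem sum_abs_eq_two_mul_card_of_sum_eq_zero {ι : Type*} [Fintype ι] (f : ι → ℝ)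
    (hsum : ∑ i, f i = 0) (hf : ∀ i, f i = -1 ∨ 0 ≤ f i) :
    ∑ i, |f i| = 2 * #{i | f i = -1} := by
  have habs : ∀ i, |f i| = f i + 2 * if f i = -1 then 1 else 0 := by
    intro i
    rcases hf i with h | h
    · norm_num [h]
    · have : f i ≠ -1 := by linarith
      simp [abs_of_nonneg h, this]
  simp only [habs, sum_add_distrib, ← mul_sum, sum_boole, hsum, zero_add]

theorem Matrix.IsHermitian.rank_add_one {n : Type*} [Fintype n] [DecidableEq n]
    {A : Matrix n n ℝ} (hA : A.IsHermitian) :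
    (A + 1).rank = Fintype.card {i // hA.eigenvalues i ≠ -1} := by
  have hspec : A + 1 = Unitary.conjStarAlgAut ℝ _ hA.eigenvectorUnitary
      (diagonal fun i => hA.eigenvalues i + 1) := by
    rw [← diagonal_add, diagonal_one, map_add, map_one]
    congr
    exact hA.spectral_theorem
  rw [hspec, Unitary.conjStarAlgAut_apply, ← Unitary.coe_star]
  simp [-isUnit_iff_ne_zero, -Unitary.coe_star, rank_diagonal, add_eq_zero_iff_eq_neg]

def fiberMatrix {V C : Type*} (c : V → C) [DecidableEq C] : Matrix V V ℝ :=
  of fun x y => if c x = c y then 1 else 0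

section fiberMatrix

variable {V C : Type*} [Fintype V] [DecidableEq C] (c : V → C)

theorem rank_fiberMatrix [Fintype C] (hc : Function.Surjective c) :
    (fiberMatrix c).rank = Fintype.card C := by
  set W : Matrix V C ℝ := of fun x j => if c x = j then 1 else 0
  set S : Matrix C V ℝ := of fun j x => if Function.surjInv hc j = x then 1 else 0
  have hWW : W * Wᵀ = fiberMatrix c := by
    ext x y
    simp [W, fiberMatrix, mul_apply, eq_comm]
  have hSW : S * W = 1 := by
    ext j k
    simp only [S, W, mul_apply, of_apply, boole_mul, sum_ite_eq, mem_univ, if_true,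
      Function.surjInv_eq hc, one_apply]
  rw [← hWW, rank_self_mul_transpose]
  refine le_antisymm W.rank_le_card_width ?_
  calc Fintype.card C = (S * W).rank := by rw [hSW, rank_one]
    _ ≤ W.rank := rank_mul_le_right S W

variable {c}

theorem exists_eq_card_fiber_of_fiberMatrix_mulVec_eq_smul {v : V → ℝ} {μ : ℝ}
    (hv : fiberMatrix c *ᵥ v = μ • v) (hv0 : v ≠ 0) (hμ : μ ≠ 0) :
    ∃ x, μ = #{y | c y = c x} := by
  have happly : ∀ x, μ * v x = ∑ y with c y = c x, v y := by
    intro x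
    simpa [fiberMatrix, mulVec, dotProduct, sum_filter, eq_comm] using (congrFun hv x).symm
  obtain ⟨x, hx⟩ := Function.ne_iff.mp hv0
  have hconst : ∀ y, c y = c x → v y = v x :=
    fun y hy => mul_left_cancel₀ hμ (by rw [happly, happly, hy])
  refine ⟨x, mul_right_cancel₀ hx ?_⟩
  rw [happly, sum_congr rfl fun y hy => hconst y (mem_filter.mp hy).2, sum_const, nsmul_eq_mul]

end fiberMatrix

theorem graphEnergy_eq_of_adj_iff {V C : Type*} [Fintype V] [Fintype C] (Γ : SimpleGraph V)
    (c : V → C) (hc : Function.Surjective c) (hadj : ∀ x y, Γ.Adj x y ↔ x ≠ y ∧ c x = c y) :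
    graphEnergy Γ = 2 * ((Fintype.card V : ℝ) - Fintype.card C) := by
  set hA := adjMatrix_isHermitian Γ
  have hfiber : Γ.adjMatrix ℝ + 1 = fiberMatrix c := by
    ext x y
    by_cases hxy : x = y <;> simp [fiberMatrix, hadj, one_apply, hxy]
  have heig : ∀ i, hA.eigenvalues i = -1 ∨ 0 ≤ hA.eigenvalues i := by
    refine fun i => or_iff_not_imp_left.mpr fun hi => ?_
    have hv : fiberMatrix c *ᵥ ⇑(hA.eigenvectorBasis i) =
        (hA.eigenvalues i + 1) • ⇑(hA.eigenvectorBasis i) := by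
      rw [← hfiber, add_mulVec, hA.mulVec_eigenvectorBasis, one_mulVec, add_smul, one_smul]
    obtain ⟨x, hx⟩ := exists_eq_card_fiber_of_fiberMatrix_mulVec_eq_smul hv
      ((WithLp.ofLp_eq_zero 2).ne.2 (hA.eigenvectorBasis.orthonormal.ne_zero i))
      (fun h => hi (eq_neg_of_add_eq_zero_left h))
    have hfiber_pos : (1 : ℝ) ≤ #{y | c y = c x} := by
      exact_mod_cast card_pos.mpr ⟨x, by simp⟩
    linarith
  have htrace : ∑ i, hA.eigenvalues i = 0 := by
    simpa using hA.trace_eq_sum_eigenvalues.symm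
  have hcount : (#{i | hA.eigenvalues i = -1} : ℝ) = Fintype.card V - Fintype.card C := by
    rw [← rank_fiberMatrix c hc, ← hfiber, hA.rank_add_one, Fintype.card_subtype_compl,
      Fintype.card_subtype, Nat.cast_sub (card_le_univ _)]
    ring
  rw [graphEnergy, sum_abs_eq_two_mul_card_of_sum_eq_zero _ htrace heig, hcount]

section CommuteModCenter

variable {G H : Type*} [Group G] [Group H] {φ : G →* H}

theorem MonoidHom.commute_of_map_eq (hker : φ.ker ≤ center G) {a b : G} (h : φ a = φ b) :
    Commute a b := by
  have hab : a * b⁻¹ ∈ center G := hker (by simp [h])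
  have hcomm : Commute b (a * b⁻¹) := mem_center_iff.mp hab b
  simpa using hcomm.symm.mul_left (Commute.refl b)

theorem MonoidHom.commute_of_map_mem_zpowers (hker : φ.ker ≤ center G) {t a b : G}
    (ha : φ a ∈ zpowers (φ t)) (hb : φ b ∈ zpowers (φ t)) : Commute a b := by
  have decomp : ∀ {a : G}, φ a ∈ zpowers (φ t) → ∃ k : ℤ, ∃ z ∈ center G, a = t ^ k * z := by
    rintro a ⟨k, hk⟩
    exact ⟨k, (t ^ k)⁻¹ * a, hker (by simp [← hk]), by group⟩
  obtain ⟨k, z, hz, rfl⟩ := decomp ha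
  obtain ⟨l, w, hw, rfl⟩ := decomp hb
  exact ((Commute.zpow_zpow_self t k l).mul_right (mem_center_iff.mp hw _)).mul_left
    (mem_center_iff.mp hz _ : Commute (t ^ l * w) z).symm

end CommuteModCenter

theorem isACGroup_of_commute_iff {G α : Type*} [Group G] (f : G → α)
    (hf : ∀ x y, x ∉ center G → y ∉ center G → (Commute x y ↔ f x = f y)) : IsACGroup G := by
  intro x hx y hy z hz
  rw [mem_centralizer_singleton_iff] at hy hz
  by_cases hyc : y ∈ center G
  · exact (mem_center_iff.mp hyc z).symm
  by_cases hzc : z ∈ center G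
  · exact mem_center_iff.mp hzc y
  exact (hf y z hyc hzc).mpr (((hf y x hyc hx).mp hy).trans ((hf z x hzc hx).mp hz).symm)

namespace DihedralGroup

variable {m : ℕ}

def reflectionIndex : DihedralGroup m → Option (ZMod m)
  | r _ => none
  | sr j => some j

variable {G : Type*} [Group G] {φ : G →* DihedralGroup m}

theorem commute_of_map_eq_r (hker : φ.ker ≤ center G) (hφ : Function.Surjective φ)
    {a b : G} {i j : ZMod m} (ha : φ a = r i) (hb : φ b = r j) : Commute a b := by
  obtain ⟨t, ht⟩ := hφ (r 1)
  have mem_zpowers : ∀ k : ZMod m, r k ∈ zpowers (φ t) :=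
    fun k => ⟨(k.cast : ℤ), by simp [ht]⟩
  exact φ.commute_of_map_mem_zpowers hker (ha ▸ mem_zpowers i) (hb ▸ mem_zpowers j)

theorem mem_center_of_commute_of_map_eq_sr (hker : φ.ker ≤ center G)
    (hφ : Function.Surjective φ) {x g : G} {i j : ZMod m} (hx : φ x = r i) (hg : φ g = sr j)
    (hxg : Commute x g) : x ∈ center G := by
  refine mem_center_iff.mpr fun w => show Commute w x from ?_
  rcases hw : φ w with k | k
  · exact commute_of_map_eq_r hker hφ hw hx
  · have hwg : Commute (w * g) x :=
      commute_of_map_eq_r hker hφ (by rw [map_mul, hw, hg, sr_mul_sr]) hx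
    simpa using hwg.mul_left hxg.symm.inv_left

theorem commute_iff_reflectionIndex_eq (hker : φ.ker = center G) (hφ : Function.Surjective φ)
    {x y : G} (hx : x ∉ center G) (hy : y ∉ center G) :
    Commute x y ↔ reflectionIndex (φ x) = reflectionIndex (φ y) := by
  rcases hx' : φ x with i | i <;> rcases hy' : φ y with j | j <;>
    simp only [reflectionIndex, reduceCtorEq, Option.some.injEq, iff_true, iff_false]
  · exact commute_of_map_eq_r hker.le hφ hx' hy'
  · exact fun hxy => hx (mem_center_of_commute_of_map_eq_sr hker.le hφ hx' hy' hxy)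
  · exact fun hxy => hy (mem_center_of_commute_of_map_eq_sr hker.le hφ hy' hx' hxy.symm)
  · refine ⟨fun hxy => ?_, fun hij => φ.commute_of_map_eq hker.le (by rw [hx', hy', hij])⟩
    have hcen : x * y ∈ center G := mem_center_of_commute_of_map_eq_sr hker.le hφ
      (by rw [map_mul, hx', hy', sr_mul_sr]) hy' (hxy.mul_left (Commute.refl y))
    rw [← hker, MonoidHom.mem_ker, map_mul, hx', hy', sr_mul_sr, one_def] at hcen
    exact (sub_eq_zero.mp (r.inj hcen)).symm

theorem exists_notMem_center_reflectionIndex_eq (hker : center G ≤ φ.ker)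
    (hφ : Function.Surjective φ) (hm : m ≠ 1) (o : Option (ZMod m)) :
    ∃ g ∉ center G, reflectionIndex (φ g) = o := by
  have notMem_center : ∀ g, φ g ≠ 1 → g ∉ center G := fun g hg hgc => hg (hker hgc)
  have : Nontrivial (ZMod m) := ZMod.nontrivial_iff.mpr hm
  rcases o with _ | j
  · obtain ⟨t, ht⟩ := hφ (r 1)
    refine ⟨t, notMem_center t ?_, by rw [ht, reflectionIndex]⟩
    rw [ht, one_def, Ne, r.injEq]
    exact one_ne_zero
  · obtain ⟨s, hs⟩ := hφ (sr j)
    exact ⟨s, notMem_center s (by rw [hs, one_def]; exact nofun), by rw [hs, reflectionIndex]⟩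

end DihedralGroup

/-- If `G/Z(G) ≅ D_{2m}` (the dihedral group of order `2m`, `m ≥ 2`), then `G` is an
AC-group and `E(Γ_G) = 2((2m - 1)|Z(G)| - m - 1)`. -/
theorem energy_commGraph_of_quotient_dihedral
    (m : ℕ) (hm : 2 ≤ m) (G : Type*) [Group G] [Fintype G]
    (h : Nonempty ((G ⧸ Subgroup.center G) ≃* DihedralGroup m)) :
    IsACGroup G ∧
      graphEnergy (commGraph G) =
        2 * ((2 * (m : ℝ) - 1) * (Nat.card (Subgroup.center G) : ℝ) - m - 1) := by
  obtain ⟨e⟩ := h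
  have : NeZero m := ⟨by omega⟩
  set φ : G →* DihedralGroup m := (e : G ⧸ center G →* DihedralGroup m).comp (QuotientGroup.mk' _)
  have hker : φ.ker = center G := by simp [φ]
  have hφ : Function.Surjective φ := e.surjective.comp (QuotientGroup.mk'_surjective _)
  have hcomm := fun x y (hx : x ∉ center G) (hy : y ∉ center G) =>
    DihedralGroup.commute_iff_reflectionIndex_eq hker hφ hx hy
  refine ⟨isACGroup_of_commute_iff _ hcomm, ?_⟩
  have hlabel : Function.Surjective fun g : {g : G // g ∉ center G} => (φ g).reflectionIndex := by
    intro o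
    obtain ⟨g, hg, hgo⟩ := DihedralGroup.exists_notMem_center_reflectionIndex_eq hker.ge hφ
      (by omega) o
    exact ⟨⟨g, hg⟩, hgo⟩
  rw [graphEnergy_eq_of_adj_iff (commGraph G) _ hlabel
    fun x y => and_congr_right' (hcomm x y x.2 y.2)]
  have hcard : Fintype.card G = 2 * m * Fintype.card (center G) := by
    simp_rw [← Nat.card_eq_fintype_card]
    rw [card_eq_card_quotient_mul_card_subgroup (center G), Nat.card_congr e.toEquiv,
      DihedralGroup.nat_card]
  rw [Fintype.card_subtype_compl, Fintype.card_option, ZMod.card, Nat.card_eq_fintype_card,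
    Nat.cast_sub (Fintype.card_subtype_le _), hcard]
  push_cast
  ring
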